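/- Let U ⊆ ℂ be open, let F, G : U → ℂ be holomorphic with G nowhere zero, and define x(u+iv) = (Re h₁, Im h₁, Re h₃) where h₁' = F and h₃' = −F/G (Weierstrass data φ = (F, −iF, −F/G)). Then at every z₀ ∈ U with F(z₀) ≠ 0, the minimal normal N_m = (n₁,n₂,1) satisfies n₁ + i n₂ = 1/conj(G(z₀)), the parabolic normal is ξ = (G/|G|² , ½ − 1/(2|G|²)) (first two components identified with a complex number), and the parabolic stereographic projection of ξ equals G(z₀): (ξ₁ + iξ₂)/(ξ₁² + ξ₂²) = G(z₀). -/

import Mathlib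

noncomputable section

/-- Partial derivative of a map on ℂ ≅ ℝ² in the u-direction (real direction 1). -/
def du {E : Type*} [NormedAddCommGroup E] [NormedSpace ℝ E]
    (f : ℂ → E) : ℂ → E := fun z => fderiv ℝ f z 1

/-- Partial derivative of a map on ℂ ≅ ℝ² in the v-direction (direction i). -/
def dv {E : Type*} [NormedAddCommGroup E] [NormedSpace ℝ E]
    (f : ℂ → E) : ℂ → E := fun z => fderiv ℝ f z Complex.I

/-- The degenerate simply isotropic inner product on ℝ³: ⟨u,v⟩ = u₁v₁ + u₂v₂. -/
def isoInner (a b : ℝ × ℝ × ℝ) : ℝ := a.1 * b.1 + a.2.1 * b.2.1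

/-- The Euclidean dot product on ℝ³. -/
def dot3 (a b : ℝ × ℝ × ℝ) : ℝ := a.1 * b.1 + a.2.1 * b.2.1 + a.2.2 * b.2.2

/-- The Euclidean cross product on ℝ³. -/
def cross3 (a b : ℝ × ℝ × ℝ) : ℝ × ℝ × ℝ :=
  (a.2.1 * b.2.2 - a.2.2 * b.2.1, a.2.2 * b.1 - a.1 * b.2.2, a.1 * b.2.1 - a.2.1 * b.1)

/-- First fundamental form coefficients (isotropic metric) of x : ℂ → ℝ³. -/
def g11 (x : ℂ → ℝ × ℝ × ℝ) (z : ℂ) : ℝ := isoInner (du x z) (du x z)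
def g12 (x : ℂ → ℝ × ℝ × ℝ) (z : ℂ) : ℝ := isoInner (du x z) (dv x z)
def g22 (x : ℂ → ℝ × ℝ × ℝ) (z : ℂ) : ℝ := isoInner (dv x z) (dv x z)

/-- The minimal normal: the unique vector of the form (n₁,n₂,1) Euclidean-orthogonal to
x_u and x_v (obtained by normalizing the cross product so its third component is 1). -/
def Nm (x : ℂ → ℝ × ℝ × ℝ) (z : ℂ) : ℝ × ℝ × ℝ :=
  ((cross3 (du x z) (dv x z)).1 / (cross3 (du x z) (dv x z)).2.2,
   (cross3 (du x z) (dv x z)).2.1 / (cross3 (du x z) (dv x z)).2.2, 1)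

/-- Second fundamental form coefficients with respect to the minimal normal. -/
def h11 (x : ℂ → ℝ × ℝ × ℝ) (z : ℂ) : ℝ := dot3 (du (du x) z) (Nm x z)
def h12 (x : ℂ → ℝ × ℝ × ℝ) (z : ℂ) : ℝ := dot3 (du (dv x) z) (Nm x z)
def h22 (x : ℂ → ℝ × ℝ × ℝ) (z : ℂ) : ℝ := dot3 (dv (dv x) z) (Nm x z)

/-- The isotropic Gaussian curvature. -/
def Kcurv (x : ℂ → ℝ × ℝ × ℝ) (z : ℂ) : ℝ :=
  (h11 x z * h22 x z - (h12 x z) ^ 2) / (g11 x z * g22 x z - (g12 x z) ^ 2)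

/-- The isotropic mean curvature. -/
def meanH (x : ℂ → ℝ × ℝ × ℝ) (z : ℂ) : ℝ :=
  (g11 x z * h22 x z - 2 * g12 x z * h12 x z + g22 x z * h11 x z) /
    (2 * (g11 x z * g22 x z - (g12 x z) ^ 2))

/-- The parabolic normal ξ = (n₁, n₂, ½(1 − (n₁² + n₂²))) built from the minimal normal
N_m = (n₁,n₂,1). -/
def xiN (x : ℂ → ℝ × ℝ × ℝ) (z : ℂ) : ℝ × ℝ × ℝ :=
  ((Nm x z).1, (Nm x z).2.1, (1 - ((Nm x z).1 ^ 2 + (Nm x z).2.1 ^ 2)) / 2)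

/-! Complex differentiability makes `x = (Re h₁, Im h₁, Re h₃)` satisfy `x_u = (Re F, Im F, Re Q)`
and `x_v = (-Im F, Re F, -Im Q)` with `Q = h₃' = -F/G`. Their cross product, read as a complex number
in its first two slots, is `-F·conj Q` with third slot `|F|²`, so `n₁ + i n₂ = -conj (Q/F) = 1/conj G`.
Then `n₁² + n₂² = 1/|G|²`, and the parabolic stereographic projection `w ↦ w/|w|²` undoes
`G ↦ 1/conj G`. -/

open Complex ComplexConjugate

section WeierstrassImmersion

variable {h₁ h₃ : ℂ → ℂ} {a b z : ℂ}

theorem fderiv_reImRe_apply (h1 : HasDerivAt h₁ a z) (h3 : HasDerivAt h₃ b z) (v : ℂ) :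
    fderiv ℝ (fun w => ((h₁ w).re, (h₁ w).im, (h₃ w).re)) z v =
      ((a * v).re, (a * v).im, (b * v).re) := by
  have d1 := h1.hasFDerivAt.restrictScalars ℝ
  have d3 := h3.hasFDerivAt.restrictScalars ℝ
  have hx : HasFDerivAt (fun w => ((h₁ w).re, (h₁ w).im, (h₃ w).re)) _ z :=
    (reCLM.hasFDerivAt.comp z d1).prodMk
      ((imCLM.hasFDerivAt.comp z d1).prodMk (reCLM.hasFDerivAt.comp z d3))
  rw [hx.fderiv]
  simp [mul_comm]

theorem du_reImRe (h1 : HasDerivAt h₁ a z) (h3 : HasDerivAt h₃ b z) :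
    du (fun w => ((h₁ w).re, (h₁ w).im, (h₃ w).re)) z = (a.re, a.im, b.re) := by
  simp [du, fderiv_reImRe_apply h1 h3]

theorem dv_reImRe (h1 : HasDerivAt h₁ a z) (h3 : HasDerivAt h₃ b z) :
    dv (fun w => ((h₁ w).re, (h₁ w).im, (h₃ w).re)) z = (-a.im, a.re, -b.im) := by
  simp [dv, fderiv_reImRe_apply h1 h3]

theorem Nm_reImRe (h1 : HasDerivAt h₁ a z) (h3 : HasDerivAt h₃ b z) (ha : a ≠ 0) :
    ((Nm (fun w => ((h₁ w).re, (h₁ w).im, (h₃ w).re)) z).1 : ℂ) +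
        ((Nm (fun w => ((h₁ w).re, (h₁ w).im, (h₃ w).re)) z).2.1 : ℂ) * I =
      -conj (b / a) := by
  have ha' : a.re * a.re + a.im * a.im ≠ 0 := by
    simpa [normSq_apply] using (normSq_pos.2 ha).ne'
  rw [Nm, du_reImRe h1 h3, dv_reImRe h1 h3]
  apply Complex.ext <;> simp [cross3, div_re, div_im, normSq_apply] <;> field_simp <;> ring

end WeierstrassImmersion

section ParabolicNormal

variable {n₁ n₂ : ℝ} {g : ℂ}

theorem sq_add_sq_eq_of_eq_inv_conj (hn : (n₁ : ℂ) + n₂ * I = 1 / conj g) :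
    n₁ ^ 2 + n₂ ^ 2 = 1 / ‖g‖ ^ 2 := by
  have := congrArg normSq hn
  rw [normSq_add_mul_I] at this
  simp [this, normSq_conj, Complex.sq_norm]

theorem inv_conj_eq_div_sq_norm (g : ℂ) : 1 / conj g = g / (‖g‖ ^ 2 : ℝ) := by
  rcases eq_or_ne g 0 with rfl | hg
  · simp
  rw [Complex.sq_norm, ← mul_conj, div_mul_cancel_left₀ hg, one_div]

theorem div_sq_add_sq_eq_of_eq_inv_conj (hg : g ≠ 0) (hn : (n₁ : ℂ) + n₂ * I = 1 / conj g) :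
    ((n₁ : ℂ) + n₂ * I) / ((n₁ ^ 2 + n₂ ^ 2 : ℝ) : ℂ) = g := by
  have hg' : (‖g‖ : ℂ) ≠ 0 := by simpa using hg
  rw [hn, sq_add_sq_eq_of_eq_inv_conj hn, inv_conj_eq_div_sq_norm]
  push_cast
  field_simp

end ParabolicNormal

theorem stmt14_general (U : Set ℂ) (F G h₁ h₃ : ℂ → ℂ)
    (hGne : ∀ z ∈ U, G z ≠ 0)
    (hh₁ : ∀ z ∈ U, HasDerivAt h₁ (F z) z)
    (hh₃ : ∀ z ∈ U, HasDerivAt h₃ (-(F z / G z)) z) :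
    ∀ z₀ ∈ U, F z₀ ≠ 0 →
      ((Nm (fun w => ((h₁ w).re, (h₁ w).im, (h₃ w).re)) z₀).1 : ℂ) +
          ((Nm (fun w => ((h₁ w).re, (h₁ w).im, (h₃ w).re)) z₀).2.1 : ℂ) * Complex.I =
        1 / (starRingEnd ℂ) (G z₀) ∧
      ((xiN (fun w => ((h₁ w).re, (h₁ w).im, (h₃ w).re)) z₀).1 : ℂ) +
          ((xiN (fun w => ((h₁ w).re, (h₁ w).im, (h₃ w).re)) z₀).2.1 : ℂ) * Complex.I =
        G z₀ / (‖G z₀‖ ^ 2 : ℝ) ∧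
      (xiN (fun w => ((h₁ w).re, (h₁ w).im, (h₃ w).re)) z₀).2.2 =
        1 / 2 - 1 / (2 * ‖G z₀‖ ^ 2) ∧
      (((xiN (fun w => ((h₁ w).re, (h₁ w).im, (h₃ w).re)) z₀).1 : ℂ) +
          ((xiN (fun w => ((h₁ w).re, (h₁ w).im, (h₃ w).re)) z₀).2.1 : ℂ) * Complex.I) /
        (((xiN (fun w => ((h₁ w).re, (h₁ w).im, (h₃ w).re)) z₀).1 ^ 2 +
          (xiN (fun w => ((h₁ w).re, (h₁ w).im, (h₃ w).re)) z₀).2.1 ^ 2 : ℝ) : ℂ) =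
        G z₀ := by
  intro z₀ hz₀ hF₀
  have hG₀ := hGne z₀ hz₀
  have hN := Nm_reImRe (hh₁ z₀ hz₀) (hh₃ z₀ hz₀) hF₀
  rw [show -conj (-(F z₀ / G z₀) / F z₀) = 1 / conj (G z₀) by
    rw [neg_div, div_div_cancel_left' hF₀, map_neg, neg_neg, map_inv₀, one_div]] at hN
  refine ⟨hN, hN.trans (inv_conj_eq_div_sq_norm _), ?_, div_sq_add_sq_eq_of_eq_inv_conj hG₀ hN⟩
  rw [xiN, sq_add_sq_eq_of_eq_inv_conj hN]
  ring

/-- For the Weierstrass data φ = (F, −iF, −F/G) (i.e. x = (Re h₁, Im h₁, Re h₃) with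
h₁' = F, h₃' = −F/G and G nowhere zero), at every z₀ with F(z₀) ≠ 0 the minimal normal
satisfies n₁ + i n₂ = 1/conj(G(z₀)), the parabolic normal is
ξ = (G/|G|², ½ − 1/(2|G|²)), and the parabolic stereographic projection of ξ equals
G(z₀). -/
theorem stmt14 (U : Set ℂ) (hU : IsOpen U) (F G h₁ h₃ : ℂ → ℂ)
    (hF : DifferentiableOn ℂ F U) (hG : DifferentiableOn ℂ G U)
    (hGne : ∀ z ∈ U, G z ≠ 0)
    (hh₁ : ∀ z ∈ U, HasDerivAt h₁ (F z) z)
    (hh₃ : ∀ z ∈ U, HasDerivAt h₃ (-(F z / G z)) z) :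
    ∀ z₀ ∈ U, F z₀ ≠ 0 →
      ((Nm (fun w => ((h₁ w).re, (h₁ w).im, (h₃ w).re)) z₀).1 : ℂ) +
          ((Nm (fun w => ((h₁ w).re, (h₁ w).im, (h₃ w).re)) z₀).2.1 : ℂ) * Complex.I =
        1 / (starRingEnd ℂ) (G z₀) ∧
      ((xiN (fun w => ((h₁ w).re, (h₁ w).im, (h₃ w).re)) z₀).1 : ℂ) +
          ((xiN (fun w => ((h₁ w).re, (h₁ w).im, (h₃ w).re)) z₀).2.1 : ℂ) * Complex.I =
        G z₀ / (‖G z₀‖ ^ 2 : ℝ) ∧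
      (xiN (fun w => ((h₁ w).re, (h₁ w).im, (h₃ w).re)) z₀).2.2 =
        1 / 2 - 1 / (2 * ‖G z₀‖ ^ 2) ∧
      (((xiN (fun w => ((h₁ w).re, (h₁ w).im, (h₃ w).re)) z₀).1 : ℂ) +
          ((xiN (fun w => ((h₁ w).re, (h₁ w).im, (h₃ w).re)) z₀).2.1 : ℂ) * Complex.I) /
        (((xiN (fun w => ((h₁ w).re, (h₁ w).im, (h₃ w).re)) z₀).1 ^ 2 +
          (xiN (fun w => ((h₁ w).re, (h₁ w).im, (h₃ w).re)) z₀).2.1 ^ 2 : ℝ) : ℂ) =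
        G z₀ :=
  stmt14_general U F G h₁ h₃ hGne hh₁ hh₃
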